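/- For every m ≥ 1, consider the set S ⊆ 𝔹^X over X = {0, 1, …, 2m−1} given by S = {v : X → Bool | v(2k) ≠ v(2k+1) for every k < m}. Every cube over X contained in S is a singleton; consequently, every family of pairwise disjoint cubes over X whose union equals S has exactly 2^m members. -/

import Mathlib

/-! A cube leaving some coordinate free contains two valuations that differ exactly in that
coordinate. No two valuations of the parity set do, since flipping one bit makes its pair equal;
so every cube inside the parity set fixes all coordinates and is a singleton. A partition of the
parity set into singletons has as many members as the set itself, which is in bijection with the
valuations of the even coordinates, hence has `2 ^ m` elements. -/

/-- A cube over a finite set `X` of propositions: the set of valuations agreeing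
with a fixed partial assignment `f` on a set `D` of propositions. -/
def IsCube {X : Type*} (c : Set (X → Bool)) : Prop :=
  ∃ (D : Set X) (f : X → Bool), c = {v : X → Bool | ∀ x ∈ D, v x = f x}

theorem IsCube.exists_eq_singleton_of_subset {X : Type*} [DecidableEq X]
    {c S : Set (X → Bool)} (hc : IsCube c) (hcS : c ⊆ S)
    (hS : ∀ v ∈ S, ∀ x, Function.update v x (!v x) ∉ S) : ∃ v, c = {v} := by
  obtain ⟨D, f, rfl⟩ := hc
  have hfD : ∀ x, x ∈ D := by
    intro x
    by_contra hx
    refine hS f (hcS fun _ _ => rfl) x (hcS fun y hy => ?_)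
    rw [Function.update_of_ne (ne_of_mem_of_not_mem hy hx)]
  refine ⟨f, Set.ext fun v => ⟨fun hv => funext fun x => hv x (hfD x), ?_⟩⟩
  rintro rfl x _
  rfl

theorem Set.ncard_eq_ncard_sUnion_of_forall_eq_singleton {α : Type*} {𝒞 : Set (Set α)}
    (h𝒞 : ∀ c ∈ 𝒞, ∃ v, c = {v}) : 𝒞.ncard = (⋃₀ 𝒞).ncard := by
  suffices 𝒞 = singleton '' ⋃₀ 𝒞 by
    rw [this, Set.ncard_image_of_injective _ Set.singleton_injective, ← this]
  ext c
  constructor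
  · intro hc
    obtain ⟨v, rfl⟩ := h𝒞 c hc
    exact ⟨v, ⟨{v}, hc, rfl⟩, rfl⟩
  · rintro ⟨v, ⟨t, ht, hvt⟩, rfl⟩
    obtain ⟨w, rfl⟩ := h𝒞 t ht
    rwa [Set.mem_singleton_iff.mp hvt]

def alternatingPairs (m : ℕ) : Set (Fin (2 * m) → Bool) :=
  {v | ∀ (k : ℕ) (hk : k < m), v ⟨2 * k, Nat.mul_lt_mul_of_pos_left hk two_pos⟩ ≠
    v ⟨2 * k + 1, Nat.lt_of_lt_of_le (Nat.lt_succ_self _) (Nat.mul_le_mul_left 2 hk)⟩}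

theorem update_notMem_alternatingPairs {m : ℕ} {v : Fin (2 * m) → Bool}
    (hv : v ∈ alternatingPairs m) (x : Fin (2 * m)) :
    Function.update v x (!v x) ∉ alternatingPairs m := by
  intro hu
  obtain ⟨x, hx⟩ := x
  obtain ⟨k, rfl | rfl⟩ := Nat.even_or_odd' x <;>
  · have hk : k < m := by omega
    have hflip := hu k hk
    rw [Function.update_self, Function.update_of_ne (by simp)] at hflip
    exact hv k hk (by simpa using hflip)

def alternatingOfEven {m : ℕ} (g : Fin m → Bool) : Fin (2 * m) → Bool :=
  fun i => xor (g ⟨i / 2, by omega⟩) (decide (i.val % 2 = 1))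

theorem alternatingOfEven_injective {m : ℕ} :
    Function.Injective (alternatingOfEven (m := m)) := by
  intro g g' h
  funext k
  simpa [alternatingOfEven] using congrFun h ⟨2 * k, by omega⟩

theorem range_alternatingOfEven (m : ℕ) :
    Set.range (alternatingOfEven (m := m)) = alternatingPairs m := by
  ext v
  constructor
  · rintro ⟨g, rfl⟩ k hk
    have hk' : (2 * k + 1) / 2 = k := by omega
    simp [alternatingOfEven, hk']
  · intro hv
    refine ⟨fun k => v ⟨2 * k, by omega⟩, funext fun i => ?_⟩
    obtain ⟨i, hi⟩ := i
    obtain ⟨k, rfl | rfl⟩ := Nat.even_or_odd' i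
    · simp [alternatingOfEven]
    · have hk : k < m := by omega
      have hk' : (2 * k + 1) / 2 = k := by omega
      simpa [alternatingOfEven, hk', Bool.eq_not_iff] using hv k hk

theorem ncard_alternatingPairs (m : ℕ) : (alternatingPairs m).ncard = 2 ^ m := by
  rw [← range_alternatingOfEven, ← Nat.card_coe_set_eq,
    Nat.card_range_of_injective alternatingOfEven_injective]
  simp

theorem parity_set_cubes (m : ℕ) :
    (∀ c : Set (Fin (2 * m) → Bool), IsCube c →
        c ⊆ {v : Fin (2 * m) → Bool | ∀ (k : ℕ) (hk : k < m),
              v ⟨2 * k, by omega⟩ ≠ v ⟨2 * k + 1, by omega⟩} →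
        ∃ v, c = {v}) ∧
    (∀ 𝒞 : Set (Set (Fin (2 * m) → Bool)),
        (∀ c ∈ 𝒞, IsCube c) →
        (∀ c ∈ 𝒞, ∀ c' ∈ 𝒞, c ≠ c' → c ∩ c' = ∅) →
        ⋃₀ 𝒞 = {v : Fin (2 * m) → Bool | ∀ (k : ℕ) (hk : k < m),
              v ⟨2 * k, by omega⟩ ≠ v ⟨2 * k + 1, by omega⟩} →
        𝒞.ncard = 2 ^ m) := by
  have cube_singleton : ∀ c, IsCube c → c ⊆ alternatingPairs m → ∃ v, c = {v} :=
    fun c hc hcS => hc.exists_eq_singleton_of_subset hcS fun _ hv =>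
      update_notMem_alternatingPairs hv
  refine ⟨cube_singleton, fun 𝒞 hcube _ hunion => ?_⟩
  have hsingle : ∀ c ∈ 𝒞, ∃ v, c = {v} := fun c hc =>
    cube_singleton c (hcube c hc) ((Set.subset_sUnion_of_mem hc).trans hunion.subset)
  rw [Set.ncard_eq_ncard_sUnion_of_forall_eq_singleton hsingle, hunion]
  exact ncard_alternatingPairs m
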